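/- arXiv:0908.2585 — 2 statements merged into one kernel-verified Lean document; each statement's English description precedes it below -/
import Mathlib

section
/- For every nonnegative integer n and every x, x * phi_n(x) = sum over k from 0 to n of (-1)^(n-k) binomial(n,k) * phi_{k+1}(x), where phi_n is the exponential polynomial. -/
open Finset Polynomial

/-- Stirling numbers of the second kind. -/
def S : ℕ → ℕ → ℕ
  | 0, 0 => 1
  | 0, _ + 1 => 0
  | _ + 1, 0 => 0
  | n + 1, k + 1 => (k + 1) * S n (k + 1) + S n k

/-- Exponential (Bell) polynomials. -/
noncomputable def phi (n : ℕ) : Polynomial ℤ :=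
  ∑ k ∈ range (n + 1), Polynomial.C (S n k : ℤ) * Polynomial.X ^ k

/-!
With `T = X (1 + d/dX)` the recurrence of the Stirling numbers reads `φₙ₊₁ = T φₙ`, so `φₙ = Tⁿ 1`.
Since `(1 + d/dX) ∘ X = T + 1`, the operator `1 + d/dX` intertwines `T` with `T + 1` and fixes `1`,
whence `φₖ₊₁ = X (T + 1)ᵏ 1`. Expanding `Tⁿ = ((T + 1) - 1)ⁿ` binomially gives the identity.
-/

theorem S_eq_stirlingSecond : ∀ n k : ℕ, S n k = Nat.stirlingSecond n k
  | 0, 0 | 0, _ + 1 | _ + 1, 0 => rfl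
  | n + 1, k + 1 => by
    rw [S, Nat.stirlingSecond_succ_succ, S_eq_stirlingSecond n (k + 1), S_eq_stirlingSecond n k]

theorem coeff_phi (n k : ℕ) : (phi n).coeff k = S n k := by
  simp only [phi, finsetSum_coeff, coeff_C_mul_X_pow, sum_ite_eq, mem_range]
  split_ifs with hk
  · rfl
  · rw [S_eq_stirlingSecond, Nat.stirlingSecond_eq_zero_of_lt (by omega), Nat.cast_zero]

theorem phi_zero : phi 0 = 1 := by
  simp [phi, S]

theorem phi_succ (n : ℕ) : phi (n + 1) = X * (phi n + derivative (phi n)) := by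
  ext (_ | k)
  · simp [coeff_phi, S]
  · simp only [coeff_X_mul, coeff_add, coeff_derivative, coeff_phi, S]
    push_cast
    ring

section Operator

variable (R : Type*) [CommSemiring R]

noncomputable def xMulOneAddDerivative : Module.End R R[X] :=
  LinearMap.mulLeft R X * (1 + derivative)

theorem oneAddDerivative_mul_mulLeft_X :
    (1 + derivative) * LinearMap.mulLeft R (X : R[X]) = xMulOneAddDerivative R + 1 := by
  refine LinearMap.ext fun p => ?_
  simp only [xMulOneAddDerivative, Module.End.mul_apply, LinearMap.add_apply,
    Module.End.one_apply, LinearMap.mulLeft_apply, derivative_mul, derivative_X, one_mul]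
  ring

theorem semiconjBy_oneAddDerivative :
    SemiconjBy (1 + derivative) (xMulOneAddDerivative R) (xMulOneAddDerivative R + 1) := by
  unfold SemiconjBy
  rw [← oneAddDerivative_mul_mulLeft_X, xMulOneAddDerivative, mul_assoc]

end Operator

theorem pow_eq_sum_zsmul_add_one_pow {A : Type*} [Ring A] (a : A) (n : ℕ) :
    a ^ n = ∑ k ∈ range (n + 1), ((-1) ^ (n - k) * n.choose k : ℤ) • (a + 1) ^ k := by
  conv_lhs => rw [← add_neg_cancel_right a 1, (Commute.neg_one_right (a + 1)).add_pow]
  refine sum_congr rfl fun k _ => ?_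
  rw [zsmul_eq_mul, Int.cast_comm, Int.cast_mul, Int.cast_pow, Int.cast_neg, Int.cast_one,
    Int.cast_natCast, mul_assoc]

theorem phi_eq_pow_apply_one (n : ℕ) : phi n = (xMulOneAddDerivative ℤ ^ n) 1 := by
  induction n with
  | zero => rw [phi_zero, pow_zero, Module.End.one_apply]
  | succ n ih => rw [phi_succ, ih, pow_succ', Module.End.mul_apply]; rfl

theorem phi_succ_eq_X_mul_add_one_pow_apply_one (n : ℕ) :
    phi (n + 1) = X * ((xMulOneAddDerivative ℤ + 1) ^ n) 1 := by
  have hintertwine := congrArg (· 1) ((semiconjBy_oneAddDerivative ℤ).pow_right n)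
  simp only [Module.End.mul_apply, LinearMap.add_apply, Module.End.one_apply, derivative_one,
    add_zero] at hintertwine
  rw [phi_eq_pow_apply_one, pow_succ', Module.End.mul_apply, ← hintertwine]
  rfl

theorem stmt5 (n : ℕ) :
    Polynomial.X * phi n =
      ∑ k ∈ range (n + 1), Polynomial.C ((-1 : ℤ) ^ (n - k) * n.choose k) * phi (k + 1) := by
  calc X * phi n
      = X * (∑ k ∈ range (n + 1), ((-1) ^ (n - k) * n.choose k : ℤ) •
        (xMulOneAddDerivative ℤ + 1) ^ k) 1 := by
        rw [phi_eq_pow_apply_one, ← pow_eq_sum_zsmul_add_one_pow]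
    _ = _ := by
        simp only [phi_succ_eq_X_mul_add_one_pow_apply_one, LinearMap.sum_apply,
          LinearMap.smul_apply, mul_sum, mul_smul_comm, C_mul']
end

section
/- For every nonnegative integer n, (1+x) * F_{n+1}(x) = x * sum over k from 0 to n of binomial(n,k) * (F_k(x) + F_{k+1}(x)), where F_n is the geometric polynomial. -/
open Finset Polynomial

/-- Geometric (Fubini) polynomials. -/
noncomputable def F (n : ℕ) : Polynomial ℤ :=
  ∑ k ∈ range (n + 1), Polynomial.C ((S n k : ℤ) * (Nat.factorial k : ℤ)) * Polynomial.X ^ k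

/-!
By Pascal's rule the right-hand side is `X * ∑ j ≤ n + 1, C(n+1, j) F_j`. Comparing coefficients
of `X^(k+1)`, the identity becomes `k! * S(n+2, k+1) = k! * ∑ j, C(n+1, j) S(j, k)`, the binomial
recurrence for Stirling numbers of the second kind, which follows by induction on `n` from the
defining recurrence.
-/

open Nat

theorem S_eq_stirlingSecond_s12 : S = stirlingSecond := by
  funext n k
  induction n generalizing k with
  | zero => cases k <;> rfl
  | succ n ih => cases k <;> simp [S, stirlingSecond_succ_succ, ih]

theorem Finset.sum_range_succ_choose_mul {R : Type*} [NonAssocSemiring R] (f : ℕ → R) (n : ℕ) :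
    ∑ j ∈ range (n + 2), ((n + 1).choose j : R) * f j =
      ∑ j ∈ range (n + 1), (n.choose j : R) * (f j + f (j + 1)) := by
  have peel : ∑ j ∈ range (n + 1), (n.choose (j + 1) : R) * f (j + 1) + (n.choose 0 : R) * f 0 =
      ∑ j ∈ range (n + 1), (n.choose j : R) * f j := by
    rw [← sum_range_succ' (fun j => (n.choose j : R) * f j), sum_range_succ, choose_succ_self,
      cast_zero, zero_mul, add_zero]
  simp only [sum_range_succ' _ (n + 1), mul_add, sum_add_distrib, ← peel, choose_succ_succ,
    cast_add, add_mul, choose_zero_right]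
  abel

theorem Nat.stirlingSecond_succ_succ_eq_sum (n k : ℕ) :
    stirlingSecond (n + 1) (k + 1) = ∑ j ∈ range (n + 1), n.choose j * stirlingSecond j k := by
  induction n generalizing k with
  | zero => cases k <;> simp [stirlingSecond_succ_succ]
  | succ n ih =>
    have shifted : ∑ j ∈ range (n + 1), n.choose j * stirlingSecond (j + 1) k =
        k * stirlingSecond (n + 1) (k + 1) + stirlingSecond (n + 1) k := by
      cases k with
      | zero => simp
      | succ k =>
        have expand (j : ℕ) : n.choose j * stirlingSecond (j + 1) (k + 1) =
            (k + 1) * (n.choose j * stirlingSecond j (k + 1)) + n.choose j * stirlingSecond j k := by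
          rw [stirlingSecond_succ_succ]; ring
        simp only [expand, sum_add_distrib, ← mul_sum, ← ih]
    have pascal := sum_range_succ_choose_mul (fun j => stirlingSecond j k) n
    simp only [cast_id] at pascal
    simp only [pascal, mul_add, sum_add_distrib, ← ih, shifted, stirlingSecond_succ_succ (n + 1)]
    ring

theorem coeff_F (n k : ℕ) : (F n).coeff k = stirlingSecond n k * (k ! : ℤ) := by
  rw [F, finsetSum_coeff]
  simp only [coeff_C_mul_X_pow, S_eq_stirlingSecond_s12, sum_ite_eq, mem_range]
  split_ifs with hk
  · rfl
  · rw [stirlingSecond_eq_zero_of_lt (by omega), cast_zero, zero_mul]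

theorem one_add_X_mul_F_succ (n : ℕ) :
    (1 + X) * F (n + 1) = X * ∑ j ∈ range (n + 2), ((n + 1).choose j : ℤ[X]) * F j := by
  ext (_ | k)
  · simp [coeff_F]
  · rw [add_mul, one_mul, coeff_add, coeff_X_mul, coeff_X_mul, finsetSum_coeff]
    simp only [coeff_natCast_mul, coeff_F, ← mul_assoc, ← sum_mul]
    have recurrence := congrArg (Nat.cast : ℕ → ℤ) (stirlingSecond_succ_succ_eq_sum (n + 1) k)
    rw [stirlingSecond_succ_succ (n + 1)] at recurrence
    push_cast at recurrence
    rw [← recurrence, factorial_succ]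
    push_cast
    ring

theorem stmt12 (n : ℕ) :
    (1 + Polynomial.X) * F (n + 1) =
      Polynomial.X * ∑ k ∈ range (n + 1), Polynomial.C (n.choose k : ℤ) * (F k + F (k + 1)) := by
  simp only [map_natCast]
  rw [← sum_range_succ_choose_mul, one_add_X_mul_F_succ]
end
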